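/- Let M be an anti-Yetter-Drinfeld module over H. Then the map ς : M → M, ς(m) = m₍₁₎·m₍₀₎, is H-linear (ς(h·m) = h·ς(m)) and H-colinear (ρ(ς(m)) = ς(m₍₀₎) ⊗ m₍₁₎); that is, ς is a morphism of anti-Yetter-Drinfeld modules. Moreover, on the anti-Yetter-Drinfeld module H ⊗ T associated to a right H-comodule T (with action x·(y⊗t) = xy ⊗ t and coaction δ(y⊗t) = y⁽²⁾ ⊗ t₍₀₎ ⊗ y⁽³⁾ t₍₁₎ S(y⁽¹⁾)), one has ς(x⊗t) = x t₍₁₎ ⊗ t₍₀₎. -/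

import Mathlib

/-!
Everything is governed by the map `D : H ⊗ H → H ⊗ H`, `x ⊗ a ↦ x⁽²⁾ ⊗ x⁽³⁾ a S(x⁽¹⁾)`: the coaction
of `H ⊗ T` sends `x ⊗ t` to `D(x ⊗ t₍₁₎)` with `t₍₀₎` inserted in the middle. Two Sweedler
computations control `D`. Multiplying its legs in reverse order gives back `x a`, because
`S(x⁽¹⁾) x⁽²⁾ = ε(x)`; this is the formula for `ς` on `H ⊗ T`, and `H`-linearity of `ς` on `M`
follows since the action `H ⊗ M → M` intertwines the two coactions (the anti-Yetter-Drinfeld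
condition). After coassociativity, `x⁽¹⁾ S(x⁽²⁾) = ε(x)` gives `D(x⁽²⁾ ⊗ x⁽¹⁾) = Δx`, which together
with coassociativity of `ρ` is colinearity of `ς`.
-/

open TensorProduct

noncomputable section

variable (k : Type) [Field k]

/-- The curried action of a `k`-algebra `R` on a module `V`, as a `k`-bilinear map. -/
def csmul (R : Type) [Ring R] [Algebra k R] (V : Type) [AddCommGroup V] [Module k V]
    [Module R V] [IsScalarTower k R V] [SMulCommClass k R V] : R →ₗ[k] V →ₗ[k] V where
  toFun r :=
    { toFun := fun v => r • v
      map_add' := smul_add r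
      map_smul' := fun c v => (smul_comm c r v).symm }
  map_add' r r' := LinearMap.ext fun v => add_smul r r' v
  map_smul' c r := LinearMap.ext fun v => smul_assoc c r v

variable (H : Type) [Ring H] [HopfAlgebra k H]

/-- The coaction `δ(x ⊗ t) = (x⁽²⁾ ⊗ t₍₀₎) ⊗ x⁽³⁾ t₍₁₎ S(x⁽¹⁾)` on `H ⊗ T`, for any
right `H`-comodule `(T, ρT)`. -/
def coact (T : Type) [AddCommGroup T] [Module k T] (ρT : T →ₗ[k] T ⊗[k] H) :
    H ⊗[k] T →ₗ[k] (H ⊗[k] T) ⊗[k] H :=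
  (LinearMap.lTensor (H ⊗[k] T)
      ((LinearMap.mul' k H) ∘ₗ (LinearMap.lTensor H (LinearMap.mul' k H)))) ∘ₗ
    (TensorProduct.assoc k H T (H ⊗[k] (H ⊗[k] H))).symm.toLinearMap ∘ₗ
    (LinearMap.lTensor H (TensorProduct.leftComm k H T (H ⊗[k] H)).toLinearMap) ∘ₗ
    (LinearMap.lTensor H (LinearMap.lTensor H
      (LinearMap.lTensor T (TensorProduct.comm k H H).toLinearMap))) ∘ₗ
    (LinearMap.lTensor H (LinearMap.lTensor H
      (TensorProduct.leftComm k H T H).toLinearMap)) ∘ₗ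
    (LinearMap.lTensor H (TensorProduct.leftComm k H H (T ⊗[k] H)).toLinearMap) ∘ₗ
    (TensorProduct.assoc k H H (H ⊗[k] (T ⊗[k] H))).toLinearMap ∘ₗ
    (LinearMap.rTensor (H ⊗[k] (T ⊗[k] H)) (TensorProduct.comm k H H).toLinearMap) ∘ₗ
    (TensorProduct.assoc k (H ⊗[k] H) H (T ⊗[k] H)).toLinearMap ∘ₗ
    (LinearMap.rTensor (T ⊗[k] H) (TensorProduct.assoc k H H H).symm.toLinearMap) ∘ₗ
    (LinearMap.rTensor (T ⊗[k] H)
      (LinearMap.rTensor (H ⊗[k] H) (HopfAlgebra.antipode (R := k)))) ∘ₗ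
    (LinearMap.rTensor (T ⊗[k] H)
      ((LinearMap.lTensor H (Coalgebra.comul (R := k))) ∘ₗ (Coalgebra.comul (R := k)))) ∘ₗ
    (LinearMap.lTensor H ρT)

/-- The multiplication map `H ⊗ (H ⊗ T) → H ⊗ T`, `x ⊗ (y ⊗ t) ↦ x y ⊗ t`
(the `H`-action on `H ⊗ T`). -/
def actHT (T : Type) [AddCommGroup T] [Module k T] :
    H ⊗[k] (H ⊗[k] T) →ₗ[k] H ⊗[k] T :=
  (LinearMap.rTensor T (LinearMap.mul' k H)) ∘ₗ
    (TensorProduct.assoc k H H T).symm.toLinearMap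

variable (M : Type) [AddCommGroup M] [Module k M] [Module H M]
  [IsScalarTower k H M] [SMulCommClass k H M]

/-- `ς : M →ₗ M`, `ς(m) = m₍₁₎ • m₍₀₎`. -/
def sigmaM (ρM : M →ₗ[k] M ⊗[k] H) : M →ₗ[k] M :=
  (TensorProduct.lift (csmul k H M)) ∘ₗ (TensorProduct.comm k M H).toLinearMap ∘ₗ ρM

open LinearMap Coalgebra HopfAlgebra

namespace HopfAlgebra

variable (R A : Type*) [CommSemiring R] [Semiring A] [HopfAlgebra R A]

def rightMulAntipode : (A ⊗[R] A) ⊗[R] (A ⊗[R] A) →ₗ[R] A ⊗[R] A :=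
  lift (lTensorHom A ∘ₗ (mul R A).flip ∘ₗ mul' R A ∘ₗ (antipode R).lTensor A)

/-- `x ⊗ a ↦ x⁽²⁾ ⊗ x⁽³⁾ a S(x⁽¹⁾)` -/
def twistedCoadjoint : A ⊗[R] A →ₗ[R] A ⊗[R] A :=
  rightMulAntipode R A ∘ₗ (TensorProduct.assoc R A A (A ⊗[R] A)).symm.toLinearMap ∘ₗ
    (TensorProduct.comm R _ A).toLinearMap ∘ₗ rTensor A (lTensor A comul ∘ₗ comul)

variable {R A}

@[simp] lemma rightMulAntipode_tmul (a p b c : A) :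
    rightMulAntipode R A ((a ⊗ₜ p) ⊗ₜ (b ⊗ₜ c)) = b ⊗ₜ (c * (a * antipode R p)) := by
  simp [rightMulAntipode]

lemma rightMulAntipode_comp_map_comul :
    rightMulAntipode R A ∘ₗ map comul comul = comul ∘ₗ lift (lsmul R A ∘ₗ counit) := by
  have hsmul : ∀ r : R, (mul R A).flip (algebraMap R A r) = r • LinearMap.id := fun r => by
    ext z; simp [Algebra.smul_def, Algebra.commutes]
  ext p q
  simp [rightMulAntipode, hsmul]

lemma assoc_symm_comp_lTensor_comul_comp_comul :
    (TensorProduct.assoc R A A (A ⊗[R] A)).symm.toLinearMap ∘ₗ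
        lTensor A (lTensor A comul ∘ₗ comul) ∘ₗ comul =
      map (comul (R := R)) comul ∘ₗ comul := by
  rw [← lTensor_comp_rTensor, lTensor_tensor, comp_assoc, comp_assoc, comp_assoc,
    ← comp_assoc comul, coassoc, lTensor_comp, comp_assoc, comp_assoc]

lemma twistedCoadjoint_comp_comm :
    twistedCoadjoint R A ∘ₗ (TensorProduct.comm R A A).toLinearMap =
      rightMulAntipode R A ∘ₗ (TensorProduct.assoc R A A (A ⊗[R] A)).symm.toLinearMap ∘ₗ
        lTensor A (lTensor A comul ∘ₗ comul) :=
  TensorProduct.ext rfl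

theorem twistedCoadjoint_comp_comm_comp_comul :
    twistedCoadjoint R A ∘ₗ (TensorProduct.comm R A A).toLinearMap ∘ₗ comul = comul := by
  calc twistedCoadjoint R A ∘ₗ (TensorProduct.comm R A A).toLinearMap ∘ₗ comul
      = rightMulAntipode R A ∘ₗ map comul comul ∘ₗ comul := by
        rw [← comp_assoc, twistedCoadjoint_comp_comm, comp_assoc, comp_assoc,
          assoc_symm_comp_lTensor_comul_comp_comul]
    _ = comul := by
        rw [← comp_assoc, rightMulAntipode_comp_map_comul, comp_assoc,
          lift_lsmul_comp_counit_comp_comul, comp_id]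

theorem mul'_comp_comm_comp_twistedCoadjoint :
    mul' R A ∘ₗ (TensorProduct.comm R A A).toLinearMap ∘ₗ twistedCoadjoint R A = mul' R A := by
  refine TensorProduct.ext' fun x a => ?_
  have key : ∀ (w : A ⊗[R] A) (q : A),
      mul' R A (TensorProduct.comm R A A (rightMulAntipode R A
        ((TensorProduct.assoc R A A (A ⊗[R] A)).symm (a ⊗ₜ TensorProduct.assoc R A A A (w ⊗ₜ q))))) =
      q * a * mul' R A (rTensor A (antipode R) w) := by
    intro w q
    induction w using TensorProduct.induction_on with
    | zero => simp
    | tmul c d => simp [mul_assoc]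
    | add w w' hw hw' => simp_all [add_tmul, tmul_add, mul_add]
  simp only [twistedCoadjoint, comp_apply, rTensor_tmul, LinearEquiv.coe_coe, comm_tmul]
  rw [← coassoc_apply, ← (ℛ R x).eq]
  simp only [map_sum, tmul_sum, rTensor_tmul, key, mul_antipode_rTensor_comul_apply,
    ← Algebra.commutes, ← Algebra.smul_def, ← smul_mul_assoc, ← Finset.sum_mul, sum_counit_smul,
    mul'_apply]

end HopfAlgebra

theorem coact_eq_twistedCoadjoint (T : Type) [AddCommGroup T] [Module k T] (ρT : T →ₗ[k] T ⊗[k] H) :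
    coact k H T ρT =
      (TensorProduct.rightComm k H H T).toLinearMap ∘ₗ rTensor T (twistedCoadjoint k H) ∘ₗ
        (TensorProduct.rightComm k H T H).toLinearMap ∘ₗ
        (TensorProduct.assoc k H T H).symm.toLinearMap ∘ₗ lTensor H ρT := by
  simp only [coact, ← comp_assoc]
  congr 1
  ext x t a
  simp only [twistedCoadjoint, AlgebraTensorModule.curry_apply, curry_apply, restrictScalars_self,
    comp_apply, rTensor_tmul, LinearEquiv.coe_coe, comm_tmul, rightComm_tmul, assoc_symm_tmul]
  generalize lTensor H (comul (R := k)) (comul x) = y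
  induction y using TensorProduct.induction_on with
  | zero => simp
  | tmul p z =>
    induction z using TensorProduct.induction_on with
    | zero => simp
    | tmul b c => simp
    | add z z' hz hz' => simp_all [tmul_add, add_tmul]
  | add y y' hy hy' => simp_all [add_tmul, tmul_add]

theorem actHT_comp_comm_comp_coact (T : Type) [AddCommGroup T] [Module k T]
    (ρT : T →ₗ[k] T ⊗[k] H) :
    actHT k H T ∘ₗ (TensorProduct.comm k (H ⊗[k] T) H).toLinearMap ∘ₗ coact k H T ρT =
      rTensor T (mul' k H) ∘ₗ (TensorProduct.assoc k H H T).symm.toLinearMap ∘ₗ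
        lTensor H (TensorProduct.comm k T H).toLinearMap ∘ₗ lTensor H ρT := by
  have hact : actHT k H T ∘ₗ (TensorProduct.comm k (H ⊗[k] T) H).toLinearMap ∘ₗ
      (TensorProduct.rightComm k H H T).toLinearMap =
        rTensor T (mul' k H ∘ₗ (TensorProduct.comm k H H).toLinearMap) := by
    ext; simp [actHT]
  have hswap : (TensorProduct.rightComm k H T H).toLinearMap ∘ₗ
      (TensorProduct.assoc k H T H).symm.toLinearMap =
        (TensorProduct.assoc k H H T).symm.toLinearMap ∘ₗ
          lTensor H (TensorProduct.comm k T H).toLinearMap := by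
    ext; simp
  rw [coact_eq_twistedCoadjoint]
  calc _ = (actHT k H T ∘ₗ (TensorProduct.comm k (H ⊗[k] T) H).toLinearMap ∘ₗ
          (TensorProduct.rightComm k H H T).toLinearMap) ∘ₗ rTensor T (twistedCoadjoint k H) ∘ₗ
          ((TensorProduct.rightComm k H T H).toLinearMap ∘ₗ
          (TensorProduct.assoc k H T H).symm.toLinearMap) ∘ₗ lTensor H ρT := by
        simp only [comp_assoc]
    _ = rTensor T (mul' k H ∘ₗ (TensorProduct.comm k H H).toLinearMap ∘ₗ twistedCoadjoint k H) ∘ₗ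
          ((TensorProduct.assoc k H H T).symm.toLinearMap ∘ₗ
          lTensor H (TensorProduct.comm k T H).toLinearMap) ∘ₗ lTensor H ρT := by
        rw [hact, hswap, ← comp_assoc, ← rTensor_comp, comp_assoc]
    _ = _ := by rw [mul'_comp_comm_comp_twistedCoadjoint, comp_assoc]

theorem sigmaM_comp_lift_csmul (ρM : M →ₗ[k] M ⊗[k] H)
    (haYD : ρM ∘ₗ TensorProduct.lift (csmul k H M) =
      (LinearMap.rTensor H (TensorProduct.lift (csmul k H M))) ∘ₗ coact k H M ρM) :
    sigmaM k H M ρM ∘ₗ TensorProduct.lift (csmul k H M) =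
      TensorProduct.lift (csmul k H M) ∘ₗ lTensor H (sigmaM k H M ρM) := by
  have hnat : TensorProduct.lift (csmul k H M) ∘ₗ (TensorProduct.comm k M H).toLinearMap ∘ₗ
      rTensor H (TensorProduct.lift (csmul k H M)) =
        TensorProduct.lift (csmul k H M) ∘ₗ actHT k H M ∘ₗ
          (TensorProduct.comm k (H ⊗[k] M) H).toLinearMap := by
    ext; simp [actHT, csmul, mul_smul]
  have hassoc : TensorProduct.lift (csmul k H M) ∘ₗ rTensor M (mul' k H) ∘ₗ
      (TensorProduct.assoc k H H M).symm.toLinearMap =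
        TensorProduct.lift (csmul k H M) ∘ₗ lTensor H (TensorProduct.lift (csmul k H M)) := by
    ext; simp [csmul, mul_smul]
  calc sigmaM k H M ρM ∘ₗ TensorProduct.lift (csmul k H M)
      = TensorProduct.lift (csmul k H M) ∘ₗ (TensorProduct.comm k M H).toLinearMap ∘ₗ
          rTensor H (TensorProduct.lift (csmul k H M)) ∘ₗ coact k H M ρM := by
        rw [sigmaM, comp_assoc, comp_assoc, haYD]
    _ = TensorProduct.lift (csmul k H M) ∘ₗ actHT k H M ∘ₗ
          (TensorProduct.comm k (H ⊗[k] M) H).toLinearMap ∘ₗ coact k H M ρM := by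
        simp only [← comp_assoc] at hnat ⊢; rw [hnat]
    _ = TensorProduct.lift (csmul k H M) ∘ₗ lTensor H (sigmaM k H M ρM) := by
        rw [actHT_comp_comm_comp_coact, sigmaM, lTensor_comp, lTensor_comp]
        simp only [← comp_assoc] at hassoc ⊢; rw [hassoc]

theorem comp_sigmaM (ρM : M →ₗ[k] M ⊗[k] H)
    (hρ_coassoc : (LinearMap.rTensor H ρM) ∘ₗ ρM =
      (TensorProduct.assoc k M H H).symm.toLinearMap ∘ₗ
        (LinearMap.lTensor M (Coalgebra.comul (R := k))) ∘ₗ ρM)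
    (haYD : ρM ∘ₗ TensorProduct.lift (csmul k H M) =
      (LinearMap.rTensor H (TensorProduct.lift (csmul k H M))) ∘ₗ coact k H M ρM) :
    ρM ∘ₗ sigmaM k H M ρM = rTensor H (sigmaM k H M ρM) ∘ₗ ρM := by
  have hswap (z : M ⊗[k] (H ⊗[k] H)) :
      TensorProduct.rightComm k H M H ((TensorProduct.assoc k H M H).symm
        (TensorProduct.comm k (M ⊗[k] H) H ((TensorProduct.assoc k M H H).symm z))) =
      TensorProduct.comm k M (H ⊗[k] H) (lTensor M (TensorProduct.comm k H H).toLinearMap z) := by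
    induction z using TensorProduct.induction_on with
    | zero => simp
    | tmul m y => induction y using TensorProduct.induction_on <;> simp_all [tmul_add]
    | add z z' hz hz' => simp_all
  have hact (z : M ⊗[k] (H ⊗[k] H)) :
      rTensor H (TensorProduct.lift (csmul k H M))
        (TensorProduct.rightComm k H H M (TensorProduct.comm k M (H ⊗[k] H) z)) =
      rTensor H (TensorProduct.lift (csmul k H M) ∘ₗ (TensorProduct.comm k M H).toLinearMap)
        ((TensorProduct.assoc k M H H).symm z) := by
    induction z using TensorProduct.induction_on with
    | zero => simp
    | tmul m y => induction y using TensorProduct.induction_on <;> simp_all [tmul_add]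
    | add z z' hz hz' => simp_all
  ext m
  have hcoassoc := congr($hρ_coassoc m)
  simp only [comp_apply, LinearEquiv.coe_coe] at hcoassoc
  calc ρM (sigmaM k H M ρM m)
      = rTensor H (TensorProduct.lift (csmul k H M)) (coact k H M ρM
          (TensorProduct.comm k M H (ρM m))) := congr($haYD _)
    _ = rTensor H (TensorProduct.lift (csmul k H M) ∘ₗ (TensorProduct.comm k M H).toLinearMap)
          ((TensorProduct.assoc k M H H).symm (lTensor M
            (twistedCoadjoint k H ∘ₗ (TensorProduct.comm k H H).toLinearMap ∘ₗ comul) (ρM m))) := by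
        simp only [coact_eq_twistedCoadjoint, comp_apply, LinearEquiv.coe_coe, lTensor_comm, hcoassoc, hswap,
          rTensor_comm, hact, lTensor_comp_apply]
    _ = rTensor H (sigmaM k H M ρM) (ρM m) := by
        rw [twistedCoadjoint_comp_comm_comp_comul, ← hcoassoc]
        simp only [sigmaM, rTensor_comp_apply]

theorem stmt17 (ρM : M →ₗ[k] M ⊗[k] H)
    (hρ_coassoc : (LinearMap.rTensor H ρM) ∘ₗ ρM =
      (TensorProduct.assoc k M H H).symm.toLinearMap ∘ₗ
        (LinearMap.lTensor M (Coalgebra.comul (R := k))) ∘ₗ ρM)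
    -- the anti-Yetter-Drinfeld compatibility: `ρ(h·m) = h⁽²⁾·m₍₀₎ ⊗ h⁽³⁾ m₍₁₎ S(h⁽¹⁾)`
    (haYD : ρM ∘ₗ TensorProduct.lift (csmul k H M) =
      (LinearMap.rTensor H (TensorProduct.lift (csmul k H M))) ∘ₗ coact k H M ρM) :
    -- `ς` is `H`-linear
    (∀ (h : H) (m : M), sigmaM k H M ρM (h • m) = h • sigmaM k H M ρM m)
    -- `ς` is `H`-colinear
    ∧ (ρM ∘ₗ sigmaM k H M ρM = (LinearMap.rTensor H (sigmaM k H M ρM)) ∘ₗ ρM)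
    -- on `H ⊗ T`, `ς(x ⊗ t) = x t₍₁₎ ⊗ t₍₀₎`
    ∧ (∀ (T : Type) [AddCommGroup T] [Module k T] (ρT : T →ₗ[k] T ⊗[k] H),
        (LinearMap.rTensor H ρT) ∘ₗ ρT =
          (TensorProduct.assoc k T H H).symm.toLinearMap ∘ₗ
            (LinearMap.lTensor T (Coalgebra.comul (R := k))) ∘ₗ ρT →
        (TensorProduct.rid k T).toLinearMap ∘ₗ
            (LinearMap.lTensor T (Coalgebra.counit (R := k))) ∘ₗ ρT = LinearMap.id →
        actHT k H T ∘ₗ (TensorProduct.comm k (H ⊗[k] T) H).toLinearMap ∘ₗ coact k H T ρT =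
          (LinearMap.rTensor T (LinearMap.mul' k H)) ∘ₗ
            (TensorProduct.assoc k H H T).symm.toLinearMap ∘ₗ
            (LinearMap.lTensor H (TensorProduct.comm k T H).toLinearMap) ∘ₗ
            (LinearMap.lTensor H ρT)) :=
  ⟨fun h m => by simpa [csmul] using congr($(sigmaM_comp_lift_csmul k H M ρM haYD) (h ⊗ₜ m)),
    comp_sigmaM k H M ρM hρ_coassoc haYD,
    fun T _ _ ρT _ _ => actHT_comp_comm_comp_coact k H T ρT⟩

end
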